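/- arXiv:2405.03225 — 5 statements merged into one kernel-verified Lean document; each statement's English description precedes it below -/
import Mathlib

section
/- Let n, K be positive integers, let Z be an n×K matrix with entries in {0,1} such that every row of Z has exactly one entry equal to 1 and every column of Z is nonzero, and let B be any K×K real matrix. Then ZᵀZ is positive definite; and writing S for the positive-definite square root of ZᵀZ, V = Z S⁻¹ and R = S B S, the matrix V has orthonormal columns (VᵀV = I_K) and V R Vᵀ = Z B Zᵀ. (Hence every multilayer stochastic blockmodel with membership matrix Z and block probability matrices B⁽ᵏ⁾ is a COSIE model with common subspace V = Z(ZᵀZ)^{-1/2} and score matrices R⁽ᵏ⁾ = (ZᵀZ)^{1/2} B⁽ᵏ⁾ (ZᵀZ)^{1/2}.) -/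
open Matrix

/-!
Each column `j` of `Z` has a row equal to the unit vector `eⱼ`, so `x ↦ Z x` is injective
and the Gram matrix `ZᵀZ` is positive definite. For a symmetric invertible `S` with
`S S = ZᵀZ`, the factors `S⁻¹` and `S` then cancel in `(Z S⁻¹)ᵀ (Z S⁻¹)` and in
`(Z S⁻¹) (S B S) (Z S⁻¹)ᵀ`.
-/

namespace Matrix

variable {m k R : Type*}

theorem exists_row_eq_single_of_membership [DecidableEq k] [Zero R] [One R]
    (Z : Matrix m k R) (h01 : ∀ i j, Z i j = 0 ∨ Z i j = 1) (hrow : ∀ i, ∃! j, Z i j = 1)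
    (hcol : ∀ j, ∃ i, Z i j ≠ 0) (j : k) : ∃ i, Z i = Pi.single j 1 := by
  obtain ⟨i, hi⟩ := hcol j
  have hij : Z i j = 1 := (h01 i j).resolve_left hi
  refine ⟨i, funext fun j' => ?_⟩
  rcases eq_or_ne j' j with rfl | hne
  · simp [hij]
  · rw [Pi.single_eq_of_ne hne]
    exact (h01 i j').resolve_right fun h1 => hne ((hrow i).unique h1 hij)

theorem mulVec_injective_of_forall_exists_row_eq_single [Fintype k] [DecidableEq k]
    [NonAssocSemiring R] (Z : Matrix m k R) (h : ∀ j, ∃ i, Z i = Pi.single j 1) :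
    Function.Injective Z.mulVec := fun x y hxy => funext fun j => by
  obtain ⟨i, hi⟩ := h j
  simpa [mulVec, hi] using congrFun hxy i

section CommRing

variable [Fintype k] [DecidableEq k] [CommRing R] (Z : Matrix m k R) {S : Matrix k k R}

theorem transpose_mul_inv_mul_mul_inv_eq_one [Fintype m] (hS : IsUnit S.det) (hST : Sᵀ = S)
    (hSS : S * S = Zᵀ * Z) : (Z * S⁻¹)ᵀ * (Z * S⁻¹) = 1 := by
  rw [transpose_mul, transpose_nonsing_inv, hST]
  calc S⁻¹ * Zᵀ * (Z * S⁻¹) = S⁻¹ * (S * S) * S⁻¹ := by simp only [hSS, Matrix.mul_assoc]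
    _ = 1 := by
      rw [← Matrix.mul_assoc, nonsing_inv_mul S hS, Matrix.one_mul, mul_nonsing_inv S hS]

theorem mul_inv_mul_mul_mul_transpose_eq (hS : IsUnit S.det) (hST : Sᵀ = S)
    (B : Matrix k k R) : (Z * S⁻¹) * (S * B * S) * (Z * S⁻¹)ᵀ = Z * B * Zᵀ := by
  rw [transpose_mul, transpose_nonsing_inv, hST]
  calc Z * S⁻¹ * (S * B * S) * (S⁻¹ * Zᵀ) = Z * ((S⁻¹ * S) * B * (S * S⁻¹)) * Zᵀ := by
        simp only [Matrix.mul_assoc]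
    _ = Z * B * Zᵀ := by rw [nonsing_inv_mul S hS, mul_nonsing_inv S hS, Matrix.one_mul,
        Matrix.mul_one]

end CommRing

end Matrix

theorem mlsbm_is_cosie_general (n K : ℕ)
    (Z : Matrix (Fin n) (Fin K) ℝ)
    (hZ01 : ∀ i j, Z i j = 0 ∨ Z i j = 1)
    (hrow : ∀ i, ∃! j, Z i j = 1)
    (hcol : ∀ j, ∃ i, Z i j ≠ 0)
    (B : Matrix (Fin K) (Fin K) ℝ) :
    (Zᵀ * Z).PosDef ∧
      ∀ S : Matrix (Fin K) (Fin K) ℝ, S.PosDef → S * S = Zᵀ * Z →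
        (Z * S⁻¹)ᵀ * (Z * S⁻¹) = (1 : Matrix (Fin K) (Fin K) ℝ) ∧
        (Z * S⁻¹) * (S * B * S) * (Z * S⁻¹)ᵀ = Z * B * Zᵀ := by
  have hinj : Function.Injective Z.mulVec := mulVec_injective_of_forall_exists_row_eq_single Z
    (exists_row_eq_single_of_membership Z hZ01 hrow hcol)
  refine ⟨by simpa using PosDef.conjTranspose_mul_self Z hinj, fun S hS hSS => ?_⟩
  have hdet : IsUnit S.det := isUnit_iff_ne_zero.mpr hS.det_pos.ne'
  have hST : Sᵀ = S := by simpa using hS.isHermitian.eq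
  exact ⟨transpose_mul_inv_mul_mul_inv_eq_one Z hdet hST hSS,
    mul_inv_mul_mul_mul_transpose_eq Z hdet hST B⟩

/-- Every multilayer stochastic blockmodel is a COSIE model: if `Z` is an `n × K`
membership matrix (0/1 entries, each row has exactly one `1`, each column nonzero)
and `B` is any `K × K` real matrix, then `ZᵀZ` is positive definite, and for the
positive-definite square root `S` of `ZᵀZ`, the matrix `V = Z S⁻¹` has orthonormal
columns and `V (S B S) Vᵀ = Z B Zᵀ`. -/
theorem mlsbm_is_cosie (n K : ℕ) (hn : 0 < n) (hK : 0 < K)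
    (Z : Matrix (Fin n) (Fin K) ℝ)
    (hZ01 : ∀ i j, Z i j = 0 ∨ Z i j = 1)
    (hrow : ∀ i, ∃! j, Z i j = 1)
    (hcol : ∀ j, ∃ i, Z i j ≠ 0)
    (B : Matrix (Fin K) (Fin K) ℝ) :
    (Zᵀ * Z).PosDef ∧
      ∀ S : Matrix (Fin K) (Fin K) ℝ, S.PosDef → S * S = Zᵀ * Z →
        (Z * S⁻¹)ᵀ * (Z * S⁻¹) = (1 : Matrix (Fin K) (Fin K) ℝ) ∧
        (Z * S⁻¹) * (S * B * S) * (Z * S⁻¹)ᵀ = Z * B * Zᵀ :=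
  mlsbm_is_cosie_general n K Z hZ01 hrow hcol B
end

section
/- Let E be a real normed vector space, m ∈ ℕ, λ > 0, and q_1, …, q_m ∈ E such that ‖q_h − q_k‖ ≠ λ for all indices h, k. For each K ∈ ℕ let q_1^{(K)}, …, q_m^{(K)} ∈ E be points with q_i^{(K)} → q_i as K → ∞ for every i ∈ {1,…,m}. Then for all h, k ∈ {1,…,m}, the λ-shortest-path distances converge: d_{m,λ}(q^{(K)}; h, k) → d_{m,λ}(q; h, k) in [0,∞] as K → ∞. -/
open Filter

/-- The `λ`-shortest-path distance between the `h`-th and `k`-th of the points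
`q : Fin m → E`: the infimum over all finite index paths `h = i₀, i₁, …, i_v = k`
all of whose steps have length `< λ` of the total path length, valued in `[0,∞]`
(the infimum of the empty set being `∞`). -/
noncomputable def spDist {E : Type*} [NormedAddCommGroup E] {m : ℕ}
    (lam : ℝ) (q : Fin m → E) (h k : Fin m) : ENNReal :=
  sInf { d : ENNReal | ∃ (v : ℕ) (i : Fin (v + 1) → Fin m),
    i 0 = h ∧ i (Fin.last v) = k ∧
    (∀ j : Fin v, ‖q (i j.succ) - q (i j.castSucc)‖ < lam) ∧
    d = ∑ j : Fin v, ENNReal.ofReal ‖q (i j.succ) - q (i j.castSucc)‖ }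

/-!
Cutting a cycle out of a path whose steps are shorter than `λ` keeps its endpoints, keeps it
admissible and does not make it longer; so `spDist` is a minimum over the finitely many paths
with fewer than `m` steps. Since no distance `‖q h - q k‖` equals `λ`, for large `K` a fixed
path is admissible for `q⁽ᴷ⁾` exactly when it is admissible for `q`, and its length converges.
A minimum over finitely many convergent sequences converges.
-/

open scoped ENNReal Topology

namespace List

variable {α M : Type*} [AddCommMonoid M]

def pathCost (w : α → α → M) : List α → M
  | a :: b :: t => w a b + pathCost w (b :: t)
  | _ => 0

variable (w : α → α → M)

@[simp] lemma pathCost_singleton (a : α) : pathCost w [a] = 0 := rfl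

@[simp] lemma pathCost_cons_cons (a b : α) (t : List α) :
    pathCost w (a :: b :: t) = w a b + pathCost w (b :: t) := rfl

lemma pathCost_append_cons (u : List α) (a : α) (t : List α) :
    pathCost w (u ++ a :: t) = pathCost w (u ++ [a]) + pathCost w (a :: t) := by
  induction u with
  | nil => simp
  | cons b u ih =>
    cases u with
    | nil => simp
    | cons c u => simp only [cons_append, pathCost_cons_cons] at ih ⊢; rw [ih, add_assoc]

lemma pathCost_ofFn {v : ℕ} (i : Fin (v + 1) → α) :
    pathCost w (ofFn i) = ∑ j : Fin v, w (i j.castSucc) (i j.succ) := by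
  induction v with
  | zero => simp
  | succ v ih =>
    have h := ih fun j => i j.succ
    rw [ofFn_succ] at h ⊢
    rw [ofFn_succ, pathCost_cons_cons, h, Fin.sum_univ_succ]
    rfl

lemma exists_eq_append_cons_append_cons_of_not_nodup {l : List α} (hl : ¬l.Nodup) :
    ∃ x l₁ l₂ l₃, l = l₁ ++ x :: l₂ ++ x :: l₃ := by
  obtain ⟨x, hx⟩ := not_forall_not.1 (mt nodup_iff_sublist.2 hl)
  obtain ⟨r₁, r₂, rfl, hx₁, hx₂⟩ := cons_sublist_iff.1 hx
  obtain ⟨l₁, l₂, rfl⟩ := append_of_mem hx₁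
  obtain ⟨l₂', l₃, rfl⟩ := append_of_mem (singleton_sublist.1 hx₂)
  exact ⟨x, l₁, l₂ ++ l₂', l₃, by simp⟩

lemma exists_nodup_isChain_pathCost_le [PartialOrder M] [CanonicallyOrderedAdd M]
    {R : α → α → Prop} {l : List α} (hl : l.IsChain R) :
    ∃ l', l'.Nodup ∧ l'.IsChain R ∧ l'.head? = l.head? ∧ l'.getLast? = l.getLast? ∧
      pathCost w l' ≤ pathCost w l := by
  by_cases hnd : l.Nodup
  · exact ⟨l, hnd, hl, rfl, rfl, le_rfl⟩
  obtain ⟨x, l₁, l₂, l₃, rfl⟩ := exists_eq_append_cons_append_cons_of_not_nodup hnd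
  have hcut : (l₁ ++ x :: l₃).IsChain R := by
    have h₁ : (l₁ ++ [x]).IsChain R := hl.infix ⟨[], l₂ ++ x :: l₃, by simp⟩
    have h₂ : ([x] ++ l₃).IsChain R := hl.infix ⟨l₁ ++ x :: l₂, [], by simp⟩
    simpa using h₁.append_overlap h₂ (cons_ne_nil x [])
  obtain ⟨l', hnd', hch', hhead, hlast, hcost⟩ := exists_nodup_isChain_pathCost_le hcut
  refine ⟨l', hnd', hch', by simp [hhead, head?_append],
    by simp only [hlast, getLast?_append_cons], ?_⟩
  refine hcost.trans ?_
  calc pathCost w (l₁ ++ x :: l₃) = pathCost w (l₁ ++ [x]) + pathCost w (x :: l₃) :=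
        pathCost_append_cons w _ _ _
    _ ≤ pathCost w (l₁ ++ [x]) + (pathCost w (x :: l₂ ++ [x]) + pathCost w (x :: l₃)) := by
        gcongr; exact le_add_self
    _ = pathCost w (l₁ ++ x :: l₂ ++ x :: l₃) := by
        have e₁ := pathCost_append_cons w l₁ x (l₂ ++ x :: l₃)
        have e₂ := pathCost_append_cons w (x :: l₂) x l₃
        simp only [cons_append, append_assoc] at e₁ e₂ ⊢
        rw [e₁, e₂]
termination_by l.length
decreasing_by subst_vars; simp

end List

lemma Filter.Tendsto.eventually_lt_const_iff {α γ : Type*} [LinearOrder α] [TopologicalSpace α]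
    [OrderTopology α] {l : Filter γ} {f : γ → α} {a c : α} (hf : Tendsto f l (𝓝 a))
    (hac : a ≠ c) : ∀ᶠ x in l, (f x < c ↔ a < c) := by
  rcases hac.lt_or_gt with hlt | hgt
  · filter_upwards [hf.eventually_lt_const hlt] with x hx using iff_of_true hx hlt
  · filter_upwards [hf.eventually_const_lt hgt] with x hx using iff_of_false hx.not_gt hgt.not_gt

lemma Filter.Tendsto.iInf_of_finite {ι L γ : Type*} [Finite ι] [CompleteLattice L]
    [TopologicalSpace L] [ContinuousInf L] {l : Filter γ} {f : ι → γ → L} {g : ι → L}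
    (hf : ∀ i, Tendsto (f i) l (𝓝 (g i))) : Tendsto (fun x => ⨅ i, f i x) l (𝓝 (⨅ i, g i)) := by
  have := Fintype.ofFinite ι
  simpa only [← Finset.inf_univ_eq_iInf] using
    Filter.Tendsto.finset_inf_nhds_apply (s := Finset.univ) fun i _ => hf i

lemma Filter.Tendsto.iInf_prop {L γ : Type*} [CompleteLattice L] [TopologicalSpace L]
    {l : Filter γ} {p : γ → Prop} {P : Prop} {f : γ → L} {a : L} (hp : ∀ᶠ x in l, (p x ↔ P))
    (hf : Tendsto f l (𝓝 a)) : Tendsto (fun x => ⨅ _ : p x, f x) l (𝓝 (⨅ _ : P, a)) := by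
  by_cases hP : P
  · rw [show (⨅ _ : P, a) = a from iInf_pos hP]
    refine hf.congr' ?_
    filter_upwards [hp] with x hx
    simp [hx.2 hP]
  · refine tendsto_const_nhds.congr' ?_
    filter_upwards [hp] with x hx
    simp [hP, hx]

section ShortestPath

variable {E : Type*} [NormedAddCommGroup E] {m : ℕ}

def IsLamPath (lam : ℝ) (q : Fin m → E) (h k : Fin m) {v : ℕ} (i : Fin (v + 1) → Fin m) :
    Prop :=
  i 0 = h ∧ i (Fin.last v) = k ∧ ∀ j : Fin v, ‖q (i j.succ) - q (i j.castSucc)‖ < lam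

noncomputable def pathLength (q : Fin m → E) {v : ℕ} (i : Fin (v + 1) → Fin m) : ℝ≥0∞ :=
  ∑ j : Fin v, ENNReal.ofReal ‖q (i j.succ) - q (i j.castSucc)‖

lemma isLamPath_iff_ofFn {lam : ℝ} {q : Fin m → E} {h k : Fin m} {v : ℕ}
    (i : Fin (v + 1) → Fin m) :
    IsLamPath lam q h k i ↔ (List.ofFn i).head? = some h ∧ (List.ofFn i).getLast? = some k ∧
      (List.ofFn i).IsChain (fun a b => ‖q b - q a‖ < lam) := by
  have hhead : (List.ofFn i).head? = some (i 0) := by rw [List.ofFn_succ]; rfl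
  have hlast : (List.ofFn i).getLast? = some (i (Fin.last v)) := by
    rw [List.getLast?_eq_some_getLast (by simp), List.getLast_ofFn]; rfl
  have hchain : (List.ofFn i).IsChain (fun a b => ‖q b - q a‖ < lam) ↔
      ∀ j : Fin v, ‖q (i j.succ) - q (i j.castSucc)‖ < lam := by
    rw [List.isChain_ofFn, Fin.forall_iff]
    simp
  simp only [IsLamPath, hhead, hlast, hchain, Option.some.injEq]

lemma pathLength_eq_pathCost (q : Fin m → E) {v : ℕ} (i : Fin (v + 1) → Fin m) :
    pathLength q i = (List.ofFn i).pathCost fun a b => ENNReal.ofReal ‖q b - q a‖ := by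
  rw [pathLength, List.pathCost_ofFn]

lemma IsLamPath.exists_shortcut {lam : ℝ} {q : Fin m → E} {h k : Fin m} {v : ℕ}
    {i : Fin (v + 1) → Fin m} (hi : IsLamPath lam q h k i) :
    ∃ (v' : Fin m) (i' : Fin (v' + 1) → Fin m),
      IsLamPath lam q h k i' ∧ pathLength q i' ≤ pathLength q i := by
  obtain ⟨hhead, hlast, hchain⟩ := (isLamPath_iff_ofFn i).1 hi
  obtain ⟨l, hnd, hchain', hhead', hlast', hcost⟩ :=
    List.exists_nodup_isChain_pathCost_le (fun a b => ENNReal.ofReal ‖q b - q a‖) hchain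
  obtain _ | ⟨a, t⟩ := l
  · simp at hhead'
  have hofFn : List.ofFn (Fin.cons a t.get : Fin (t.length + 1) → Fin m) = a :: t := by
    rw [List.ofFn_cons, List.ofFn_get]
  have ht : t.length < m := by simpa using hnd.length_le_card
  refine ⟨⟨t.length, ht⟩, Fin.cons a t.get, (isLamPath_iff_ofFn _).2 ?_, ?_⟩
  · rw [hofFn, hhead', hlast']
    exact ⟨hhead, hlast, hchain'⟩
  · rwa [pathLength_eq_pathCost, pathLength_eq_pathCost, hofFn]

theorem spDist_eq_iInf_isLamPath (lam : ℝ) (q : Fin m → E) (h k : Fin m) :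
    spDist lam q h k =
      ⨅ (v : Fin m) (i : Fin (v + 1) → Fin m) (_ : IsLamPath lam q h k i), pathLength q i := by
  refine le_antisymm
    (le_iInf₂ fun v i => le_iInf fun hi => sInf_le ⟨v, i, hi.1, hi.2.1, hi.2.2, rfl⟩)
    (le_sInf ?_)
  rintro _ ⟨v, i, hstart, hend, hsteps, rfl⟩
  obtain ⟨v', i', hi', hle⟩ := IsLamPath.exists_shortcut ⟨hstart, hend, hsteps⟩
  exact (iInf₂_le v' i').trans ((iInf_le _ hi').trans hle)

variable {ι : Type*} {l : Filter ι} {q : Fin m → E} {qK : ι → Fin m → E}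

lemma eventually_isLamPath_iff {lam : ℝ} (hgen : ∀ a b, ‖q a - q b‖ ≠ lam)
    (hconv : ∀ a, Tendsto (fun K => qK K a) l (𝓝 (q a))) (h k : Fin m) {v : ℕ}
    (i : Fin (v + 1) → Fin m) :
    ∀ᶠ K in l, (IsLamPath lam (qK K) h k i ↔ IsLamPath lam q h k i) := by
  have hsteps : ∀ᶠ K in l, ∀ j : Fin v, (‖qK K (i j.succ) - qK K (i j.castSucc)‖ < lam ↔
      ‖q (i j.succ) - q (i j.castSucc)‖ < lam) :=
    eventually_all.2 fun j =>
      ((hconv _).sub (hconv _)).norm.eventually_lt_const_iff (hgen _ _)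
  filter_upwards [hsteps] with K hK
  exact and_congr_right' (and_congr_right' (forall_congr' hK))

lemma tendsto_pathLength (hconv : ∀ a, Tendsto (fun K => qK K a) l (𝓝 (q a))) {v : ℕ}
    (i : Fin (v + 1) → Fin m) : Tendsto (fun K => pathLength (qK K) i) l (𝓝 (pathLength q i)) :=
  tendsto_finsetSum _ fun _ _ => ENNReal.tendsto_ofReal ((hconv _).sub (hconv _)).norm

end ShortestPath

theorem spDist_continuous_general {E : Type*} [NormedAddCommGroup E]
    (m : ℕ) (lam : ℝ) (q : Fin m → E)
    (hgen : ∀ h k : Fin m, ‖q h - q k‖ ≠ lam)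
    (qK : ℕ → Fin m → E)
    (hconv : ∀ i : Fin m, Tendsto (fun K => qK K i) atTop (nhds (q i))) :
    ∀ h k : Fin m,
      Tendsto (fun K => spDist lam (qK K) h k) atTop (nhds (spDist lam q h k)) := by
  intro h k
  simp only [spDist_eq_iInf_isLamPath]
  exact Tendsto.iInf_of_finite fun v => Tendsto.iInf_of_finite fun i =>
    (tendsto_pathLength hconv i).iInf_prop (eventually_isLamPath_iff hgen hconv h k i)

/-- Continuity of shortest-path distances: if no pairwise distance among
`q₁, …, q_m` equals the neighbourhood parameter `λ`, and `q⁽ᴷ⁾ᵢ → qᵢ` for each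
`i`, then all pairwise `λ`-shortest-path distances converge. -/
theorem spDist_continuous {E : Type*} [NormedAddCommGroup E] [NormedSpace ℝ E]
    (m : ℕ) (lam : ℝ) (hlam : 0 < lam) (q : Fin m → E)
    (hgen : ∀ h k : Fin m, ‖q h - q k‖ ≠ lam)
    (qK : ℕ → Fin m → E)
    (hconv : ∀ i : Fin m, Tendsto (fun K => qK K i) atTop (nhds (q i))) :
    ∀ h k : Fin m,
      Tendsto (fun K => spDist lam (qK K) h k) atTop (nhds (spDist lam q h k)) :=
  spDist_continuous_general m lam q hgen qK hconv
end

section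
/- Let s ≥ 2 and l ≥ s. Let y_1,…,y_s and t_1,…,t_l be real numbers with Σ_{k=1}^s (t_k − t̄_s)² ≠ 0, where t̄_s is the mean of t_1,…,t_s. For each K ∈ ℕ let z_1^{(K)},…,z_l^{(K)} be real numbers such that |z_h^{(K)} − z_k^{(K)}| → |t_h − t_k| as K → ∞ for all h, k ∈ {1,…,l}. Then for every r ∈ {1,…,l}, the predicted response computed from the z's converges to the predicted response computed from the t's: ŷ((z_1^{(K)},…,z_s^{(K)}), y; z_r^{(K)}) → ŷ((t_1,…,t_s), y; t_r) as K → ∞ (the regression denominators Σ_{k=1}^s (z_k^{(K)} − z̄^{(K)})² being nonzero for all sufficiently large K). -/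
open Filter

/-- Mean of `s` real numbers. -/
noncomputable def sampleMean (s : ℕ) (x : Fin s → ℝ) : ℝ := (∑ k, x k) / s

/-- Least-squares slope for simple linear regression of `y` on `x`. -/
noncomputable def lsSlope (s : ℕ) (x y : Fin s → ℝ) : ℝ :=
  (∑ k, (y k - sampleMean s y) * (x k - sampleMean s x)) /
    (∑ k, (x k - sampleMean s x) ^ 2)

/-- Least-squares intercept for simple linear regression of `y` on `x`. -/
noncomputable def lsIntercept (s : ℕ) (x y : Fin s → ℝ) : ℝ :=
  sampleMean s y - lsSlope s x y * sampleMean s x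

/-- Least-squares predicted response at the point `u`. -/
noncomputable def lsPred (s : ℕ) (x y : Fin s → ℝ) (u : ℝ) : ℝ :=
  lsIntercept s x y + lsSlope s x y * u

/-!
The prediction `ŷ(x, y; u) = ȳ + Σₖ (yₖ - ȳ)(xₖ - x̄)(u - x̄) / Σₖ (xₖ - x̄)²` is built from
products `(a - x̄)(b - x̄)` of centred points, and each of these is an average of products
`(a - xⱼ)(b - xⱼ')` of differences. By polarization such a product of differences is a
combination of squared distances, so it is determined by, and continuous in, the pairwise
distances alone. Hence convergence of the distances carries over to numerator and denominator,
and the denominator of the limit is nonzero, so it is eventually nonzero along the way.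
-/

lemma lsPred_eq_sampleMean_add (s : ℕ) (x y : Fin s → ℝ) (u : ℝ) :
    lsPred s x y u = sampleMean s y +
      (∑ k, (y k - sampleMean s y) * ((x k - sampleMean s x) * (u - sampleMean s x))) /
        ∑ k, (x k - sampleMean s x) ^ 2 := by
  simp only [lsPred, lsIntercept, lsSlope, ← mul_assoc, ← Finset.sum_mul]
  ring

lemma sub_sampleMean_mul_sub_sampleMean {s : ℕ} (hs : s ≠ 0) (x : Fin s → ℝ) (u v : ℝ) :
    (u - sampleMean s x) * (v - sampleMean s x) =
      (∑ j, ∑ j', (u - x j) * (v - x j')) / ((s : ℝ) * s) := by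
  have hs' : (s : ℝ) ≠ 0 := Nat.cast_ne_zero.mpr hs
  have hcentre : ∀ w, w - sampleMean s x = (∑ j, (w - x j)) / s := fun w => by
    simp only [sampleMean, Finset.sum_sub_distrib, Finset.sum_const, Finset.card_univ,
      Fintype.card_fin, nsmul_eq_mul]
    field_simp
  rw [hcentre u, hcentre v, div_mul_div_comm, Finset.sum_mul_sum]

section PairwiseDistances

variable {α ι : Type*} {F : Filter α} {z : α → ι → ℝ} {t : ι → ℝ}

lemma tendsto_sub_sq_of_tendsto_abs_sub
    (hconv : ∀ a b, Tendsto (fun K => |z K a - z K b|) F (nhds |t a - t b|)) (a b : ι) :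
    Tendsto (fun K => (z K a - z K b) ^ 2) F (nhds ((t a - t b) ^ 2)) := by
  simpa only [sq_abs] using (hconv a b).pow 2

lemma tendsto_sub_mul_sub_of_tendsto_abs_sub
    (hconv : ∀ a b, Tendsto (fun K => |z K a - z K b|) F (nhds |t a - t b|)) (a b p q : ι) :
    Tendsto (fun K => (z K a - z K b) * (z K p - z K q)) F (nhds ((t a - t b) * (t p - t q))) := by
  have polarization : ∀ x : ι → ℝ, (x a - x b) * (x p - x q) =
      ((x a - x q) ^ 2 + (x b - x p) ^ 2 - (x a - x p) ^ 2 - (x b - x q) ^ 2) / 2 :=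
    fun x => by ring
  have hsq := tendsto_sub_sq_of_tendsto_abs_sub hconv
  simp only [polarization]
  exact ((((hsq a q).add (hsq b p)).sub (hsq a p)).sub (hsq b q)).div_const 2

lemma tendsto_centred_mul_centred_of_tendsto_abs_sub
    (hconv : ∀ a b, Tendsto (fun K => |z K a - z K b|) F (nhds |t a - t b|))
    {s : ℕ} (hs : s ≠ 0) (c : Fin s → ι) (a b : ι) :
    Tendsto (fun K => (z K a - sampleMean s (z K ∘ c)) * (z K b - sampleMean s (z K ∘ c))) F
      (nhds ((t a - sampleMean s (t ∘ c)) * (t b - sampleMean s (t ∘ c)))) := by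
  simp only [sub_sampleMean_mul_sub_sampleMean hs, Function.comp_apply]
  exact (tendsto_finsetSum _ fun j _ => tendsto_finsetSum _ fun j' _ =>
    tendsto_sub_mul_sub_of_tendsto_abs_sub hconv a (c j) b (c j')).div_const _

end PairwiseDistances

theorem pred_from_proxy_regressors_consistent_general
    (s l : ℕ) (hl : s ≤ l)
    (y : Fin s → ℝ) (t : Fin l → ℝ)
    (ht : ∑ k : Fin s, (t (Fin.castLE hl k) -
      sampleMean s (fun k => t (Fin.castLE hl k))) ^ 2 ≠ 0)
    (z : ℕ → Fin l → ℝ)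
    (hconv : ∀ h k : Fin l,
      Tendsto (fun K => |z K h - z K k|) atTop (nhds |t h - t k|)) :
    (∀ᶠ K in atTop,
      ∑ k : Fin s, (z K (Fin.castLE hl k) -
        sampleMean s (fun k => z K (Fin.castLE hl k))) ^ 2 ≠ 0) ∧
    ∀ r : Fin l,
      Tendsto (fun K => lsPred s (fun k => z K (Fin.castLE hl k)) y (z K r))
        atTop (nhds (lsPred s (fun k => t (Fin.castLE hl k)) y (t r))) := by
  have hs : s ≠ 0 := by
    rintro rfl
    exact ht (Finset.sum_of_isEmpty _)
  have hcentred := tendsto_centred_mul_centred_of_tendsto_abs_sub hconv hs (Fin.castLE hl)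
  have hdenom := tendsto_finsetSum Finset.univ fun k _ =>
    hcentred (Fin.castLE hl k) (Fin.castLE hl k)
  simp only [Function.comp_def, ← sq] at hdenom
  refine ⟨hdenom.eventually_ne ht, fun r => ?_⟩
  have hnum := tendsto_finsetSum Finset.univ fun k _ =>
    (hcentred (Fin.castLE hl k) r).const_mul (y k - sampleMean s y)
  simp only [lsPred_eq_sampleMean_add]
  exact tendsto_const_nhds.add (hnum.div hdenom ht)

/-- Deterministic heart of Theorem 4: if all pairwise distances of the proxy
regressors `z⁽ᴷ⁾₁, …, z⁽ᴷ⁾_l` converge to the pairwise distances of the true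
regressors `t₁, …, t_l`, then (the regression denominators being eventually
nonzero) the response predicted from the first `s` proxies at `z⁽ᴷ⁾_r` converges
to the response predicted from the first `s` true regressors at `t_r`. -/
theorem pred_from_proxy_regressors_consistent
    (s l : ℕ) (hs : 2 ≤ s) (hl : s ≤ l)
    (y : Fin s → ℝ) (t : Fin l → ℝ)
    (ht : ∑ k : Fin s, (t (Fin.castLE hl k) -
      sampleMean s (fun k => t (Fin.castLE hl k))) ^ 2 ≠ 0)
    (z : ℕ → Fin l → ℝ)
    (hconv : ∀ h k : Fin l,
      Tendsto (fun K => |z K h - z K k|) atTop (nhds |t h - t k|)) :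
    (∀ᶠ K in atTop,
      ∑ k : Fin s, (z K (Fin.castLE hl k) -
        sampleMean s (fun k => z K (Fin.castLE hl k))) ^ 2 ≠ 0) ∧
    ∀ r : Fin l,
      Tendsto (fun K => lsPred s (fun k => z K (Fin.castLE hl k)) y (z K r))
        atTop (nhds (lsPred s (fun k => t (Fin.castLE hl k)) y (t r))) :=
  pred_from_proxy_regressors_consistent_general s l hl y t ht z hconv
end

section
/- Let l ∈ ℕ, let Δ⁽⁰⁾ ∈ ℝ^{l×l} and let (Δ⁽ᴷ⁾)_{K∈ℕ} be a sequence of matrices in ℝ^{l×l} with ‖Δ⁽ᴷ⁾ − Δ⁽⁰⁾‖_F → 0 as K → ∞. Suppose that for every K, D⁽ᴷ⁾ ∈ Min(Δ⁽ᴷ⁾). Then the sequence (D⁽ᴷ⁾)_{K∈ℕ} has an accumulation point D⁽⁰⁾ (i.e., some subsequence D⁽ᴷ_j⁾ converges to D⁽⁰⁾ in Frobenius norm) such that D⁽⁰⁾ ∈ Min(Δ⁽⁰⁾). -/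
open Filter

/-- The set of `l × l` EDM-1 matrices of embedding dimension at most one:
matrices of pairwise distances of `l` points on the real line. -/
def EDM1 (l : ℕ) : Set (Matrix (Fin l) (Fin l) ℝ) :=
  { D | ∃ z : Fin l → ℝ, ∀ i j, D i j = |z i - z j| }

/-- The Frobenius norm of a real matrix. -/
noncomputable def frobNorm {l : ℕ} (M : Matrix (Fin l) (Fin l) ℝ) : ℝ :=
  Real.sqrt (∑ i, ∑ j, (M i j) ^ 2)

/-- The set of globally minimizing EDM-1 matrices for the dissimilarity matrix
`Δ`: the EDM-1 matrices closest to `Δ` in Frobenius norm (the raw-stress global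
minimizers with unit weights). -/
noncomputable def MinSet (l : ℕ) (Δ : Matrix (Fin l) (Fin l) ℝ) :
    Set (Matrix (Fin l) (Fin l) ℝ) :=
  { D ∈ EDM1 l | frobNorm (D - Δ) = ⨅ D' : EDM1 l, frobNorm ((D' : Matrix (Fin l) (Fin l) ℝ) - Δ) }


/-!
`Min(Δ)` is the set of nearest points to `Δ` in `EDM1 l`, for the Euclidean (Frobenius) metric.
Nearest points of a closed set in a proper metric space behave upper semicontinuously: the
minimizers for a convergent sequence `Δ⁽ᴷ⁾` stay bounded, so a subsequence converges; its limit
lies in the closed set, and since the distance to a set is 1-Lipschitz it realizes the distance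
from `Δ⁽⁰⁾`. The set `EDM1 l` is closed because, after translating the points so that `z i₀ = 0`,
each `|z i| = D i i₀` stays bounded along a convergent sequence of EDM-1 matrices.
-/

open Metric Topology

section NearestPoints

variable {E : Type*} [MetricSpace E] [ProperSpace E] {S : Set E}

theorem IsClosed.exists_subseq_tendsto_of_dist_eq_infDist (hS : IsClosed S)
    {x : ℕ → E} {x₀ : E} (hx : Tendsto x atTop (𝓝 x₀)) {y : ℕ → E} (hyS : ∀ n, y n ∈ S)
    (hy : ∀ n, dist (y n) (x n) = infDist (x n) S) :
    ∃ y₀ ∈ S, dist y₀ x₀ = infDist x₀ S ∧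
      ∃ φ : ℕ → ℕ, StrictMono φ ∧ Tendsto (y ∘ φ) atTop (𝓝 y₀) := by
  obtain ⟨C, hC⟩ := (hx.dist tendsto_const_nhds).bddAbove_range
  have hbdd : Bornology.IsBounded (Set.range y) := by
    refine (isBounded_iff_subset_closedBall x₀).2 ⟨infDist x₀ S + 2 * C, ?_⟩
    rintro _ ⟨n, rfl⟩
    have hxn : dist (x n) x₀ ≤ C := hC ⟨n, rfl⟩
    calc dist (y n) x₀ ≤ dist (y n) (x n) + dist (x n) x₀ := dist_triangle _ _ _
      _ ≤ infDist x₀ S + dist (x n) x₀ + dist (x n) x₀ := by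
          rw [hy n]; gcongr; exact infDist_le_infDist_add_dist
      _ ≤ infDist x₀ S + 2 * C := by linarith
  obtain ⟨y₀, -, φ, hφ, hyφ⟩ := tendsto_subseq_of_bounded hbdd fun n => Set.mem_range_self n
  have hxφ := hx.comp hφ.tendsto_atTop
  refine ⟨y₀, hS.mem_of_tendsto hyφ (Eventually.of_forall fun n => hyS _), ?_, φ, hφ, hyφ⟩
  exact tendsto_nhds_unique ((hyφ.dist hxφ).congr fun n => hy (φ n))
    (((continuous_infDist_pt S).tendsto x₀).comp hxφ)

end NearestPoints

def pairwiseDistMatrix {n : Type*} (z : n → ℝ) : Matrix n n ℝ :=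
  Matrix.of fun i j => |z i - z j|

theorem continuous_pairwiseDistMatrix {n : Type*} :
    Continuous (pairwiseDistMatrix : (n → ℝ) → Matrix n n ℝ) := by
  unfold pairwiseDistMatrix; fun_prop

theorem pairwiseDistMatrix_sub_const {n : Type*} (z : n → ℝ) (c : ℝ) :
    pairwiseDistMatrix (fun i => z i - c) = pairwiseDistMatrix z := by
  ext i j; simp [pairwiseDistMatrix]

theorem EDM1_eq_range (l : ℕ) : EDM1 l = Set.range pairwiseDistMatrix := by
  ext D
  exact exists_congr fun z => by simp [pairwiseDistMatrix, ← Matrix.ext_iff, eq_comm]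

theorem isClosed_range_pairwiseDistMatrix {n : Type*} [Fintype n] :
    IsClosed (Set.range (pairwiseDistMatrix : (n → ℝ) → Matrix n n ℝ)) := by
  rcases isEmpty_or_nonempty n with _ | ⟨⟨i₀⟩⟩
  · exact Set.subsingleton_of_subsingleton.isClosed
  have : FrechetUrysohnSpace (Matrix n n ℝ) := inferInstanceAs (FrechetUrysohnSpace (n → n → ℝ))
  refine isClosed_of_closure_subset fun D hD => ?_
  obtain ⟨M, hM, hMD⟩ := mem_closure_iff_seq_limit.1 hD
  choose z hz using hM
  set w : ℕ → n → ℝ := fun k i => z k i - z k i₀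
  have hw : ∀ k, pairwiseDistMatrix (w k) = M k := fun k =>
    (pairwiseDistMatrix_sub_const _ _).trans (hz k)
  have hentry : ∀ i j, Tendsto (fun k => M k i j) atTop (𝓝 (D i j)) := fun i j =>
    (hMD.apply_nhds i).apply_nhds j
  choose C hC using fun i => (hentry i i₀).bddAbove_range
  have hwC : ∀ k, w k ∈ Set.univ.pi fun i => Set.Icc (-C i) (C i) := by
    intro k i _
    have h : |w k i| = M k i i₀ := by rw [← hw k]; simp [pairwiseDistMatrix, w]
    exact abs_le.1 (h ▸ hC i ⟨k, rfl⟩)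
  obtain ⟨ζ, -, φ, hφ, hwφ⟩ := (isCompact_univ_pi fun i => isCompact_Icc).tendsto_subseq hwC
  refine ⟨ζ, tendsto_nhds_unique ((continuous_pairwiseDistMatrix.tendsto ζ).comp hwφ) ?_⟩
  simpa only [Function.comp_def, hw] using hMD.comp hφ.tendsto_atTop

theorem isClosed_EDM1 (l : ℕ) : IsClosed (EDM1 l) :=
  EDM1_eq_range l ▸ isClosed_range_pairwiseDistMatrix

section Frobenius

-- The Frobenius norm induces the product topology, so purely topological statements about
-- matrices keep their meaning inside this section.
attribute [local instance] Matrix.frobeniusNormedAddCommGroup Matrix.frobeniusNormedSpace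

theorem frobNorm_eq_norm {l : ℕ} (M : Matrix (Fin l) (Fin l) ℝ) : frobNorm M = ‖M‖ := by
  simp [frobNorm, Matrix.frobenius_norm_def, Real.sqrt_eq_rpow]

theorem minSet_eq (l : ℕ) (Δ : Matrix (Fin l) (Fin l) ℝ) :
    MinSet l Δ = {D ∈ EDM1 l | dist D Δ = infDist Δ (EDM1 l)} := by
  simp only [MinSet, frobNorm_eq_norm, ← dist_eq_norm, infDist_eq_iInf, dist_comm Δ]

theorem tendsto_iff_frobNorm_sub_tendsto_zero {α : Type*} {l : ℕ} {f : α → Matrix (Fin l) (Fin l) ℝ}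
    {F : Filter α} {M : Matrix (Fin l) (Fin l) ℝ} :
    Tendsto f F (𝓝 M) ↔ Tendsto (fun a => frobNorm (f a - M)) F (𝓝 0) := by
  simp only [frobNorm_eq_norm]
  exact tendsto_iff_norm_sub_tendsto_zero

theorem exists_subseq_tendsto_mem_minSet {l : ℕ} {Δ₀ : Matrix (Fin l) (Fin l) ℝ}
    {Δ : ℕ → Matrix (Fin l) (Fin l) ℝ} (hΔ : Tendsto Δ atTop (𝓝 Δ₀))
    {D : ℕ → Matrix (Fin l) (Fin l) ℝ} (hD : ∀ K, D K ∈ MinSet l (Δ K)) :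
    ∃ D₀ ∈ MinSet l Δ₀, ∃ φ : ℕ → ℕ, StrictMono φ ∧ Tendsto (D ∘ φ) atTop (𝓝 D₀) := by
  simp only [minSet_eq] at hD ⊢
  obtain ⟨D₀, hD₀, hdist, hsubseq⟩ := (isClosed_EDM1 l).exists_subseq_tendsto_of_dist_eq_infDist
    hΔ (fun K => (hD K).1) (fun K => (hD K).2)
  exact ⟨D₀, ⟨hD₀, hdist⟩, hsubseq⟩

end Frobenius

/-- Continuity theorem for raw-stress embeddings (Theorem 3): if `Δ⁽ᴷ⁾ → Δ⁽⁰⁾`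
in Frobenius norm and `D⁽ᴷ⁾ ∈ Min(Δ⁽ᴷ⁾)` for each `K`, then `(D⁽ᴷ⁾)` has an
accumulation point lying in `Min(Δ⁽⁰⁾)`. -/
theorem rawStress_minimizers_accumulate
    (l : ℕ) (Δ₀ : Matrix (Fin l) (Fin l) ℝ)
    (Δ : ℕ → Matrix (Fin l) (Fin l) ℝ)
    (hΔ : Tendsto (fun K => frobNorm (Δ K - Δ₀)) atTop (nhds 0))
    (D : ℕ → Matrix (Fin l) (Fin l) ℝ)
    (hD : ∀ K, D K ∈ MinSet l (Δ K)) :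
    ∃ (D₀ : Matrix (Fin l) (Fin l) ℝ) (φ : ℕ → ℕ), StrictMono φ ∧
      Tendsto (fun j => frobNorm (D (φ j) - D₀)) atTop (nhds 0) ∧
      D₀ ∈ MinSet l Δ₀ := by
  rw [← tendsto_iff_frobNorm_sub_tendsto_zero] at hΔ
  obtain ⟨D₀, hD₀, φ, hφ, hDφ⟩ := exists_subseq_tendsto_mem_minSet hΔ hD
  exact ⟨D₀, φ, hφ, tendsto_iff_frobNorm_sub_tendsto_zero.1 hDφ, hD₀⟩
end

section
/- Let L > 0, let D ∈ ℕ, and let ψ : [0, L] → ℝ^D satisfy ‖ψ(s) − ψ(t)‖ = |s − t| for all s, t ∈ [0, L] (an arclength-parameterized isometric embedding of the segment). Let λ > 0 and let t_1, …, t_m ∈ [0, L] be such that for every u ∈ [0, L] there exists i ∈ {1,…,m} with |u − t_i| < λ/2. Set q_i = ψ(t_i) for each i. Then for all h, k ∈ {1,…,m}, the λ-shortest-path distance recovers the geodesic distance exactly: d_{m,λ}(q; h, k) = |t_h − t_k|, and this infimum is attained by a path whose indices traverse the sample points in monotone order of their parameters. -/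
/-! Along the segment `‖q a - q b‖ = |t a - t b|`, so by the triangle inequality no path from
`h` to `k` is shorter than `|t h - t k|`. Conversely, walking from `t h` towards `t k`, the
`λ/2`-net offers a next sample in `(x, x + λ)` whenever the target is at least `λ` away from the
current parameter `x`; the resulting monotone chain has steps shorter than `λ`, and its length
telescopes to `|t h - t k|`. -/

open Finset Set

theorem Fin.sum_succ_sub_castSucc {M : Type*} [AddCommGroup M] {v : ℕ} (g : Fin (v + 1) → M) :
    ∑ j : Fin v, (g j.succ - g j.castSucc) = g (Fin.last v) - g 0 := by
  rw [Finset.sum_sub_distrib, eq_sub_of_add_eq' (Fin.sum_univ_succ g).symm,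
    eq_sub_of_add_eq (Fin.sum_univ_castSucc g).symm]
  abel

theorem Fin.norm_sub_le_sum_norm_sub {E : Type*} [SeminormedAddCommGroup E] {v : ℕ}
    (g : Fin (v + 1) → E) :
    ‖g (Fin.last v) - g 0‖ ≤ ∑ j : Fin v, ‖g j.succ - g j.castSucc‖ := by
  rw [← Fin.sum_succ_sub_castSucc]
  exact norm_sum_le _ _

theorem Fin.sum_abs_sub_of_monotone {v : ℕ} {g : Fin (v + 1) → ℝ} (hg : Monotone g) :
    ∑ j : Fin v, |g j.succ - g j.castSucc| = g (Fin.last v) - g 0 := by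
  rw [← Fin.sum_succ_sub_castSucc]
  exact sum_congr rfl fun j _ => abs_of_nonneg (sub_nonneg.2 (hg Fin.castSucc_lt_succ.le))

variable {ι : Type*}

theorem exists_mem_Ioo_of_net {t : ι → ℝ} {lam x y : ℝ} (hlam : 0 < lam)
    (hnet : ∀ u ∈ Icc x y, ∃ i, |u - t i| < lam / 2) (hxy : x + lam ≤ y) :
    ∃ i, t i ∈ Ioo x (x + lam) := by
  obtain ⟨i, hi⟩ := hnet (x + lam / 2) ⟨by linarith, by linarith⟩
  rw [abs_lt] at hi
  exact ⟨i, by linarith, by linarith⟩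

theorem exists_chain_of_net [Fintype ι] (t : ι → ℝ) {lam : ℝ} {a k : ι} (hak : t a ≤ t k)
    (hnet : ∀ u ∈ Icc (t a) (t k), ∃ i, |u - t i| < lam / 2) :
    ∃ (v : ℕ) (i : Fin (v + 1) → ι), i 0 = a ∧ i (Fin.last v) = k ∧
      ∀ j : Fin v, t (i j.succ) - t (i j.castSucc) ∈ Ico 0 lam := by
  have hlam : 0 < lam := by
    obtain ⟨i, hi⟩ := hnet (t a) ⟨le_rfl, hak⟩
    linarith [abs_nonneg (t a - t i)]
  induction hn : #{b | t a < t b ∧ t b ≤ t k} using Nat.strong_induction_on generalizing a with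
  | _ n ih =>
  rcases lt_or_ge (t k) (t a + lam) with hclose | hfar
  · refine ⟨1, ![a, k], rfl, rfl, fun j => ?_⟩
    fin_cases j
    simpa using ⟨hak, by linarith⟩
  · obtain ⟨b, hab, hba⟩ := exists_mem_Ioo_of_net hlam hnet hfar
    have hbk : t b ≤ t k := by linarith
    have hfewer : #{c | t b < t c ∧ t c ≤ t k} < n := by
      rw [← hn]
      refine card_lt_card ((Finset.ssubset_iff_of_subset ?_).2 ⟨b, ?_, ?_⟩)
      · exact monotone_filter_right _ fun c _ hc => ⟨hab.trans hc.1, hc.2⟩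
      · simpa using ⟨hab, hbk⟩
      · simp
    obtain ⟨v, i, hi0, hiv, hstep⟩ :=
      ih _ hfewer hbk (fun u hu => hnet u ⟨hab.le.trans hu.1, hu.2⟩) rfl
    refine ⟨v + 1, Fin.cons a i, rfl, by simpa [← Fin.succ_last] using hiv, Fin.cases ?_ fun j => ?_⟩
    · simpa [hi0] using ⟨hab.le, by linarith⟩
    · simpa [← Fin.succ_castSucc] using hstep j

theorem exists_monotone_path_of_net [Fintype ι] (t : ι → ℝ) {lam : ℝ} {a k : ι}
    (hak : t a ≤ t k) (hnet : ∀ u ∈ Icc (t a) (t k), ∃ i, |u - t i| < lam / 2) :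
    ∃ (v : ℕ) (i : Fin (v + 1) → ι), i 0 = a ∧ i (Fin.last v) = k ∧
      (∀ j : Fin v, |t (i j.succ) - t (i j.castSucc)| < lam) ∧
      ∑ j : Fin v, |t (i j.succ) - t (i j.castSucc)| = t k - t a ∧ Monotone (t ∘ i) := by
  obtain ⟨v, i, hi0, hiv, hstep⟩ := exists_chain_of_net t hak hnet
  have hmono : Monotone (t ∘ i) :=
    Fin.monotone_iff_le_succ.2 fun j => sub_nonneg.1 (hstep j).1
  refine ⟨v, i, hi0, hiv, fun j => ?_, ?_, hmono⟩
  · rw [abs_of_nonneg (hstep j).1]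
    exact (hstep j).2
  · simpa [hi0, hiv] using Fin.sum_abs_sub_of_monotone hmono

theorem exists_monotone_or_antitone_path_of_net [Fintype ι] (t : ι → ℝ) {lam : ℝ} (a k : ι)
    (hnet : ∀ u ∈ uIcc (t a) (t k), ∃ i, |u - t i| < lam / 2) :
    ∃ (v : ℕ) (i : Fin (v + 1) → ι), i 0 = a ∧ i (Fin.last v) = k ∧
      (∀ j : Fin v, |t (i j.succ) - t (i j.castSucc)| < lam) ∧
      ∑ j : Fin v, |t (i j.succ) - t (i j.castSucc)| = |t a - t k| ∧
      (Monotone (t ∘ i) ∨ Antitone (t ∘ i)) := by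
  rcases le_total (t a) (t k) with hak | hka
  · obtain ⟨v, i, hi0, hiv, hstep, hlen, hmono⟩ :=
      exists_monotone_path_of_net t hak fun u hu => hnet u (Icc_subset_uIcc hu)
    refine ⟨v, i, hi0, hiv, hstep, ?_, .inl hmono⟩
    rw [hlen, abs_sub_comm, abs_of_nonneg (sub_nonneg.2 hak)]
  · have habs_neg : ∀ x y : ℝ, |-x - -y| = |x - y| := fun x y => by
      rw [neg_sub_neg, abs_sub_comm]
    obtain ⟨v, i, hi0, hiv, hstep, hlen, hmono⟩ :=
      exists_monotone_path_of_net (fun i => -t i) (neg_le_neg hka) fun u hu => by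
        obtain ⟨i, hi⟩ := hnet (-u) (Icc_subset_uIcc' ⟨le_neg.1 hu.2, neg_le.1 hu.1⟩)
        exact ⟨i, by rwa [← neg_neg u, habs_neg]⟩
    simp only [habs_neg] at hstep hlen
    refine ⟨v, i, hi0, hiv, hstep, ?_, .inr fun x y hxy => neg_le_neg_iff.1 (hmono hxy)⟩
    rw [hlen, abs_of_nonneg (sub_nonneg.2 hka)]
    ring

theorem ofReal_norm_sub_le_spDist {E : Type*} [NormedAddCommGroup E] {m : ℕ} (lam : ℝ)
    (q : Fin m → E) (h k : Fin m) :
    ENNReal.ofReal ‖q h - q k‖ ≤ spDist lam q h k := by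
  refine le_sInf ?_
  rintro _ ⟨v, i, rfl, rfl, -, rfl⟩
  rw [← ENNReal.ofReal_sum_of_nonneg fun j _ => norm_nonneg _, norm_sub_rev]
  exact ENNReal.ofReal_le_ofReal (Fin.norm_sub_le_sum_norm_sub (q ∘ i))

theorem spDist_eq_of_path {E : Type*} [NormedAddCommGroup E] {m : ℕ} {lam : ℝ}
    {q : Fin m → E} {h k : Fin m} {v : ℕ} {i : Fin (v + 1) → Fin m}
    (hi0 : i 0 = h) (hiv : i (Fin.last v) = k)
    (hstep : ∀ j : Fin v, ‖q (i j.succ) - q (i j.castSucc)‖ < lam)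
    (hlen : ∑ j : Fin v, ‖q (i j.succ) - q (i j.castSucc)‖ = ‖q h - q k‖) :
    spDist lam q h k = ENNReal.ofReal ‖q h - q k‖ := by
  refine le_antisymm (sInf_le ⟨v, i, hi0, hiv, hstep, ?_⟩) (ofReal_norm_sub_le_spDist lam q h k)
  rw [← hlen, ENNReal.ofReal_sum_of_nonneg fun j _ => norm_nonneg _]

theorem spDist_exact_on_segment_general
    (L : ℝ) (D : ℕ)
    (ψ : ℝ → EuclideanSpace ℝ (Fin D))
    (hψ : ∀ s ∈ Set.Icc (0 : ℝ) L, ∀ t ∈ Set.Icc (0 : ℝ) L,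
      ‖ψ s - ψ t‖ = |s - t|)
    (lam : ℝ)
    (m : ℕ) (t : Fin m → ℝ) (ht : ∀ i, t i ∈ Set.Icc (0 : ℝ) L)
    (hnet : ∀ u ∈ Set.Icc (0 : ℝ) L, ∃ i : Fin m, |u - t i| < lam / 2)
    (q : Fin m → EuclideanSpace ℝ (Fin D)) (hq : ∀ i, q i = ψ (t i)) :
    ∀ h k : Fin m,
      spDist lam q h k = ENNReal.ofReal |t h - t k| ∧
      ∃ (v : ℕ) (i : Fin (v + 1) → Fin m),
        i 0 = h ∧ i (Fin.last v) = k ∧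
        (∀ j : Fin v, ‖q (i j.succ) - q (i j.castSucc)‖ < lam) ∧
        (∑ j : Fin v, ENNReal.ofReal ‖q (i j.succ) - q (i j.castSucc)‖
          = ENNReal.ofReal |t h - t k|) ∧
        (Monotone (fun j => t (i j)) ∨ Antitone (fun j => t (i j))) := by
  intro h k
  have hqt : ∀ a b, ‖q a - q b‖ = |t a - t b| := fun a b => by
    rw [hq, hq]
    exact hψ _ (ht a) _ (ht b)
  obtain ⟨v, i, hi0, hiv, hstep, hlen, hmono⟩ := exists_monotone_or_antitone_path_of_net t h k
    fun u hu => hnet u (uIcc_subset_Icc (ht h) (ht k) hu)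
  have hdist := spDist_eq_of_path (lam := lam) (q := q) hi0 hiv (by simpa [hqt] using hstep)
    (by simpa [hqt] using hlen)
  simp only [hqt] at hdist ⊢
  exact ⟨hdist, v, i, hi0, hiv, hstep,
    by rw [← hlen, ENNReal.ofReal_sum_of_nonneg fun j _ => abs_nonneg _], hmono⟩

/-- Exact geodesic recovery on a flat one-dimensional manifold: if
`ψ : [0, L] → ℝ^D` is an arclength-parameterized isometric embedding of a
segment and the sample parameters `t₁, …, t_m` form a `λ/2`-net of `[0, L]`,
then the `λ`-shortest-path distance between the sample points `qᵢ = ψ(tᵢ)`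
equals the geodesic distance `|t_h − t_k|`, attained by a path traversing the
sample points in monotone order of their parameters. -/
theorem spDist_exact_on_segment
    (L : ℝ) (hL : 0 < L) (D : ℕ)
    (ψ : ℝ → EuclideanSpace ℝ (Fin D))
    (hψ : ∀ s ∈ Set.Icc (0 : ℝ) L, ∀ t ∈ Set.Icc (0 : ℝ) L,
      ‖ψ s - ψ t‖ = |s - t|)
    (lam : ℝ) (hlam : 0 < lam)
    (m : ℕ) (t : Fin m → ℝ) (ht : ∀ i, t i ∈ Set.Icc (0 : ℝ) L)
    (hnet : ∀ u ∈ Set.Icc (0 : ℝ) L, ∃ i : Fin m, |u - t i| < lam / 2)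
    (q : Fin m → EuclideanSpace ℝ (Fin D)) (hq : ∀ i, q i = ψ (t i)) :
    ∀ h k : Fin m,
      spDist lam q h k = ENNReal.ofReal |t h - t k| ∧
      ∃ (v : ℕ) (i : Fin (v + 1) → Fin m),
        i 0 = h ∧ i (Fin.last v) = k ∧
        (∀ j : Fin v, ‖q (i j.succ) - q (i j.castSucc)‖ < lam) ∧
        (∑ j : Fin v, ENNReal.ofReal ‖q (i j.succ) - q (i j.castSucc)‖
          = ENNReal.ofReal |t h - t k|) ∧
        (Monotone (fun j => t (i j)) ∨ Antitone (fun j => t (i j))) :=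
  spDist_exact_on_segment_general L D ψ hψ lam m t ht hnet q hq
end
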